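/- Let A₀, A₁, … be a countable family of co-c.e. hyperimmune sets. Then there exists a hyperimmune set B such that for every n, every computable-in-X array tracing Aₙ yields an X-computable array tracing B; in particular, any oracle X relative to which B remains hyperimmune preserves the hyperimmunity of every Aₙ. -/

import Mathlib

open Classical

/-- The characteristic function of a set of naturals, as a partial function. -/
noncomputable def CharFun (X : Set ℕ) : ℕ →. ℕ :=
  fun n => Part.some (if n ∈ X then 1 else 0)

/-- Partial recursiveness relative to an oracle `O`. -/
inductive RecIn (O : ℕ →. ℕ) : (ℕ →. ℕ) → Prop
  | oracle : RecIn O O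
  | zero : RecIn O (fun _ => Part.some 0)
  | succ : RecIn O (fun n => Part.some n.succ)
  | left : RecIn O (fun n => Part.some n.unpair.1)
  | right : RecIn O (fun n => Part.some n.unpair.2)
  | pair {f g} : RecIn O f → RecIn O g →
      RecIn O (fun n => Nat.pair <$> f n <*> g n)
  | comp {f g} : RecIn O f → RecIn O g →
      RecIn O (fun n => g n >>= f)
  | prec {f g} : RecIn O f → RecIn O g →
      RecIn O (Nat.unpaired fun a n =>
        n.rec (f a) fun y IH => do {let i ← IH; g (Nat.pair a (Nat.pair y i))})
  | rfind {f} : RecIn O f →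
      RecIn O (fun a => Nat.rfind fun n => (fun m => decide (m = 0)) <$> f (Nat.pair a n))

/-- A (typed) function is computable in oracle `O`. -/
def OracleComputableIn {α β : Type} [Primcodable α] [Primcodable β] (O : ℕ →. ℕ) (f : α → β) : Prop :=
  RecIn O (fun n => Part.some (Encodable.encode (Option.map f (Encodable.decode (α := α) n))))

/-- A set of naturals is computable in oracle `O`. -/
def SetComputableIn (O : ℕ →. ℕ) (X : Set ℕ) : Prop :=
  RecIn O (CharFun X)

/-- A (typed) predicate is computably enumerable in oracle `O`. -/
def CEIn {α : Type} [Primcodable α] (O : ℕ →. ℕ) (p : α → Prop) : Prop :=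
  ∃ f : ℕ →. ℕ, RecIn O f ∧ ∀ a : α, (f (Encodable.encode a)).Dom ↔ p a

/-- A (typed) predicate is computably enumerable. -/
def CEPred {α : Type} [Primcodable α] (p : α → Prop) : Prop :=
  ∃ f : α →. Unit, Partrec f ∧ ∀ a, (f a).Dom ↔ p a

/-- A set of naturals is co-c.e. -/
def CoCE (A : Set ℕ) : Prop := CEPred (fun n => n ∉ A)

/-- The members of an array are mutually disjoint. -/
def ArrayDisjoint (F : ℕ → Finset ℕ) : Prop :=
  ∀ i j, i ≠ j → Disjoint (F i) (F j)

/-- An array traces a set `A` if each of its members meets `A`. -/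
def Traces (F : ℕ → Finset ℕ) (A : Set ℕ) : Prop :=
  ∀ i, ∃ x ∈ F i, x ∈ A

/-- A set is hyperimmune if it is infinite and not traced by any computable array. -/
def Hyperimmune (A : Set ℕ) : Prop :=
  A.Infinite ∧ ∀ F : ℕ → Finset ℕ, Computable F → ArrayDisjoint F → ¬ Traces F A

/-- A set is hyperimmune relative to the oracle `O`. -/
def HyperimmuneIn (O : ℕ →. ℕ) (A : Set ℕ) : Prop :=
  A.Infinite ∧ ∀ F : ℕ → Finset ℕ, OracleComputableIn O F → ArrayDisjoint F → ¬ Traces F A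

/-- A set is immune if it is infinite and has no infinite computable subset. -/
def Immune (A : Set ℕ) : Prop :=
  A.Infinite ∧ ∀ W : Set ℕ, W.Infinite → ComputablePred (· ∈ W) → ¬ W ⊆ A

/-- A set is immune relative to the oracle `O`. -/
def ImmuneIn (O : ℕ →. ℕ) (A : Set ℕ) : Prop :=
  A.Infinite ∧ ∀ W : Set ℕ, W.Infinite → SetComputableIn O W → ¬ W ⊆ A

/-- The effective join of two sets of naturals. -/
def SetJoin (Y Z : Set ℕ) : Set ℕ :=
  {n | if n % 2 = 0 then n / 2 ∈ Y else n / 2 ∈ Z}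

/-- `X` is Turing reducible to `Z`. -/
def TuringLE (X Z : Set ℕ) : Prop := SetComputableIn (CharFun Z) X

/-!
Write `U n = A 0 ∪ ⋯ ∪ A n` (`Set.accumulate A n`) and `p S = Nat.nth (· ∈ S)` for the principal
function of an infinite set `S`. Relative to any oracle, `S` is hyperimmune iff `p S` is not
dominated by an oracle-computable function: a disjoint array tracing `S` bounds `p S` by the
partial sums of the codes of its members, and conversely a dominating `M` yields the blocks
`[h k, h (k + 1))` with `h (k + 1) = M (h k) + 1`.

Each `U n` is hyperimmune. Given a computable disjoint array tracing `V ∪ A` with `V` co-c.e., either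
infinitely many members avoid `V`, and since `Vᶜ` is c.e. these can be found effectively and trace
`A`, or almost all members meet `V` and trace `V`.

Enumerate the computable functions as `g 0, g 1, …` and let `B` be the range of
`b k = k + max_{j ≤ k} p (U (ℓ j)) j`, where `ℓ → ∞` slowly enough that for every `e` some `k` with
`ℓ k = e` has `g e k < p (U e) k`. Then `b` escapes every computable function, so `B` is
hyperimmune, while `b k ≤ p (A n) k + k + C` for every `n`: an `X`-computable array tracing `A n`
bounds `p (A n)`, hence `p B = b`, `X`-computably, and so yields an `X`-computable array tracing `B`.
-/

open Encodable Denumerable Filter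

theorem Nat.Partrec.recIn {O f : ℕ →. ℕ} (hf : Nat.Partrec f) : RecIn O f := by
  induction hf with
  | zero => exact .zero
  | succ => exact .succ
  | left => exact .left
  | right => exact .right
  | pair _ _ ihf ihg => exact .pair ihf ihg
  | comp _ _ ihf ihg => exact .comp ihf ihg
  | prec _ _ ihf ihg => exact .prec ihf ihg
  | rfind _ ihf => exact .rfind ihf

theorem RecIn.partrec {O f : ℕ →. ℕ} (hO : Nat.Partrec O) (hf : RecIn O f) : Nat.Partrec f := by
  induction hf with
  | oracle => exact hO
  | zero => exact .zero
  | succ => exact .succ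
  | left => exact .left
  | right => exact .right
  | pair _ _ ihf ihg => exact .pair ihf ihg
  | comp _ _ ihf ihg => exact .comp ihf ihg
  | prec _ _ ihf ihg => exact .prec ihf ihg
  | rfind _ ihf => exact .rfind ihf

def TotalRecIn (O : ℕ →. ℕ) (f : ℕ → ℕ) : Prop :=
  RecIn O fun n => Part.some (f n)

section TotalRecIn

variable {O : ℕ →. ℕ} {f g : ℕ → ℕ}

theorem TotalRecIn.of_eq (hf : TotalRecIn O f) (H : ∀ n, f n = g n) : TotalRecIn O g :=
  funext H ▸ hf

theorem totalRecIn_iff_computable (hO : Nat.Partrec O) : TotalRecIn O f ↔ Computable f :=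
  ⟨fun h => Partrec.nat_iff.2 (h.partrec hO), fun h => (Partrec.nat_iff.1 h).recIn⟩

theorem Computable.totalRecIn (hf : Computable f) : TotalRecIn O f :=
  (Partrec.nat_iff.1 hf).recIn

theorem TotalRecIn.comp (hf : TotalRecIn O f) (hg : TotalRecIn O g) :
    TotalRecIn O fun n => f (g n) := by
  simpa [TotalRecIn] using RecIn.comp hf hg

theorem TotalRecIn.pair (hf : TotalRecIn O f) (hg : TotalRecIn O g) :
    TotalRecIn O fun n => Nat.pair (f n) (g n) := by
  simpa [TotalRecIn, Seq.seq] using RecIn.pair hf hg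

theorem TotalRecIn.comp₂ {op : ℕ → ℕ → ℕ} (hop : Computable₂ op) (hf : TotalRecIn O f)
    (hg : TotalRecIn O g) : TotalRecIn O fun n => op (f n) (g n) := by
  have hop' : Computable fun m : ℕ => op m.unpair.1 m.unpair.2 :=
    hop.comp (Computable.fst.comp Computable.unpair) (Computable.snd.comp Computable.unpair)
  simpa using hop'.totalRecIn.comp (hf.pair hg)

theorem TotalRecIn.nat_rec {step : ℕ → ℕ → ℕ} (c : ℕ)
    (hstep : TotalRecIn O fun m => step m.unpair.1 m.unpair.2) :
    TotalRecIn O fun k => Nat.rec (motive := fun _ => ℕ) c step k := by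
  have hprec := RecIn.prec (Computable.const c).totalRecIn
    (hstep.comp (Computable.snd.comp Computable.unpair).totalRecIn)
  have hpair : TotalRecIn O fun k => Nat.pair 0 k :=
    (Computable.const 0).totalRecIn.pair Computable.id.totalRecIn
  refine (congrArg (RecIn O) (funext fun k => ?_)).mpr (RecIn.comp hprec hpair)
  simp only [Part.bind_eq_bind, Part.bind_some, Nat.unpaired, Nat.unpair_pair]
  induction k with
  | zero => rfl
  | succ k ih => simp [← ih]

theorem TotalRecIn.iterate (hf : TotalRecIn O f) (a : ℕ) : TotalRecIn O fun k => f^[k] a := by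
  refine (TotalRecIn.nat_rec a (step := fun _ x => f x)
    (hf.comp (Computable.snd.comp Computable.unpair).totalRecIn)).of_eq fun k => ?_
  induction k with
  | zero => rfl
  | succ k ih => rw [Function.iterate_succ_apply', ← ih]

theorem TotalRecIn.sum_range (hf : TotalRecIn O f) :
    TotalRecIn O fun k => ∑ i ∈ Finset.range k, f i := by
  refine (TotalRecIn.nat_rec 0 (step := fun i s => s + f i) ?_).of_eq fun k => ?_
  · exact (Computable.snd.comp Computable.unpair).totalRecIn.comp₂ Primrec.nat_add.to_comp
      (hf.comp (Computable.fst.comp Computable.unpair).totalRecIn)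
  · induction k with
    | zero => rfl
    | succ k ih => rw [Finset.sum_range_succ, ← ih]

theorem oracleComputableIn_iff {β : Type} [Primcodable β] {F : ℕ → β} :
    OracleComputableIn O F ↔ TotalRecIn O fun n => encode (F n) := by
  have hsucc : OracleComputableIn O F ↔ TotalRecIn O fun n => encode (F n) + 1 := by
    simp [OracleComputableIn, TotalRecIn]
  rw [hsucc]
  exact ⟨fun h => (Computable.pred.totalRecIn.comp h).of_eq fun _ => rfl,
    fun h => Computable.succ.totalRecIn.comp h⟩

theorem oracleComputableIn_iff_computable (hO : Nat.Partrec O) {β : Type} [Primcodable β]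
    {F : ℕ → β} : OracleComputableIn O F ↔ Computable F := by
  rw [oracleComputableIn_iff, totalRecIn_iff_computable hO, Computable.encode_iff]

theorem TotalRecIn.encode_comp {β γ : Type} [Primcodable β] [Primcodable γ] {F : ℕ → β}
    {g : β → γ} (hg : Computable g) (hF : TotalRecIn O fun n => encode (F n)) :
    TotalRecIn O fun n => encode (g (F n)) := by
  have hcode : Computable fun m => encode (Option.map g (decode (α := β) m)) - 1 :=
    Primrec.nat_sub.to_comp.comp (Computable.encode.comp
      (Computable.option_map Computable.decode (hg.comp Computable.snd).to₂)) (Computable.const 1)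
  exact (hcode.totalRecIn.comp hF).of_eq fun n => by simp

end TotalRecIn

theorem mem_ofNat_finset_iff {x n : ℕ} :
    x ∈ ofNat (Finset ℕ) n ↔ x ∈ raise' (ofNat (List ℕ) n) 0 := by
  rw [show ofNat (Finset ℕ) n
    = (raise'Finset (ofNat (List ℕ) n) 0).map (eqv ℕ).symm.toEmbedding from rfl]
  simp [raise'Finset, eqv]
  exact Iff.rfl

theorem le_add_encode_of_mem_raise' {x : ℕ} :
    ∀ {l : List ℕ} {n : ℕ}, x ∈ raise' l n → x ≤ n + encode l
  | m :: l, n, h => by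
    have hpair := Nat.add_le_pair m (encode l)
    rw [encode_list_cons]
    rcases List.mem_cons.1 h with rfl | h
    · simp only [encode_nat]; omega
    · have := le_add_encode_of_mem_raise' h
      simp only [encode_nat]; omega

theorem le_of_mem_ofNat_finset {x n : ℕ} (hx : x ∈ ofNat (Finset ℕ) n) : x ≤ n := by
  simpa using le_add_encode_of_mem_raise' (mem_ofNat_finset_iff.1 hx)

theorem raise'_eq_foldl (l : List ℕ) (n : ℕ) :
    raise' l n = (l.foldl (fun p d => (p.1 ++ [d + p.2], d + p.2 + 1)) ([], n)).1 := by
  suffices ∀ acc n, acc ++ raise' l n =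
      (l.foldl (fun p d => (p.1 ++ [d + p.2], d + p.2 + 1)) (acc, n)).1 from this [] n
  induction l with
  | nil => simp [raise']
  | cons d l ih => intro acc n; simp [raise', ← ih]

theorem primrec_raise' : Primrec₂ raise' := by
  have hstep : Primrec₂ fun (_ : List ℕ × ℕ) (p : (List ℕ × ℕ) × ℕ) =>
      (p.1.1 ++ [p.2 + p.1.2], p.2 + p.1.2 + 1) := by
    have hsum : Primrec fun q : (List ℕ × ℕ) × (List ℕ × ℕ) × ℕ => q.2.2 + q.2.1.2 :=
      Primrec.nat_add.comp (Primrec.snd.comp Primrec.snd)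
        (Primrec.snd.comp (Primrec.fst.comp Primrec.snd))
    exact (Primrec.list_concat.comp (Primrec.fst.comp (Primrec.fst.comp Primrec.snd)) hsum).pair
      (Primrec.succ.comp hsum)
  exact (Primrec.fst.comp (Primrec.list_foldl Primrec.fst
    (Primrec.pair (Primrec.const []) Primrec.snd) hstep)).of_eq
    fun p => (raise'_eq_foldl p.1 p.2).symm

/- `encode` below is that of `Primcodable (Finset ℕ)`, which comes from `Denumerable`; instance
search on `Encodable (Finset ℕ)` finds `Finset.encodable` instead, hence the `erw`s. -/
theorem PrimrecRel.forall_mem_finset {β : Type*} [Primcodable β] {R : ℕ → β → Prop}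
    (hR : PrimrecRel R) : PrimrecRel fun (s : Finset ℕ) b => ∀ x ∈ s, R x b := by
  refine (hR.forall_mem_list.comp (primrec_raise'.comp
    ((Primrec.ofNat (List ℕ)).comp (Primrec.encode.comp Primrec.fst)) (Primrec.const 0))
    Primrec.snd).of_eq fun p => ?_
  simp only [← mem_ofNat_finset_iff]
  erw [ofNat_encode]

theorem raise'_replicate_zero (m n : ℕ) : raise' (List.replicate m 0) n = List.range' n m := by
  induction m generalizing n with
  | zero => rfl
  | succ m ih => simp [List.replicate_succ, raise', ih, List.range'_succ]

theorem primrec_finset_Ico : Primrec₂ (Finset.Ico : ℕ → ℕ → Finset ℕ) := by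
  let code : ℕ × ℕ → List ℕ := fun p =>
    if p.2 ≤ p.1 then [] else p.1 :: (List.range (p.2 - p.1 - 1)).map fun _ => 0
  have hcode : Primrec code :=
    Primrec.ite (Primrec.nat_le.comp Primrec.snd Primrec.fst) (Primrec.const [])
      (Primrec.list_cons.comp Primrec.fst (Primrec.list_map
        (Primrec.list_range.comp (Primrec.nat_sub.comp
          (Primrec.nat_sub.comp Primrec.snd Primrec.fst) (Primrec.const 1)))
        (Primrec.const 0).to₂))
  refine ((Primrec.ofNat (Finset ℕ)).comp (Primrec.encode.comp hcode)).of_eq fun p => ?_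
  ext x
  rw [mem_ofNat_finset_iff, ofNat_encode, Finset.mem_Ico]
  simp only [code]
  split_ifs
  · simp [raise']; omega
  · simp [raise', List.map_const', raise'_replicate_zero]; omega

theorem ArrayDisjoint.comp_injective {F : ℕ → Finset ℕ} (hF : ArrayDisjoint F) {f : ℕ → ℕ}
    (hf : f.Injective) : ArrayDisjoint (F ∘ f) :=
  fun _ _ hij => hF _ _ (hf.ne hij)

theorem arrayDisjoint_Ico {h : ℕ → ℕ} (hh : StrictMono h) :
    ArrayDisjoint fun k => Finset.Ico (h k) (h (k + 1)) := by
  intro i j hij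
  wlog hlt : i < j generalizing i j
  · exact (this j i hij.symm (by omega)).symm
  have := hh.monotone (show i + 1 ≤ j from hlt)
  exact Finset.disjoint_left.2 fun x hi hj => by simp only [Finset.mem_Ico] at hi hj; omega

theorem Nat.nth_le_of_lt_card {S : Set ℕ} {t : Finset ℕ} {k m : ℕ}
    (ht : ∀ x ∈ t, x ∈ S ∧ x ≤ m) (hk : k < t.card) : Nat.nth (· ∈ S) k ≤ m := by
  have hsub : t ⊆ (Finset.range (m + 1)).filter (· ∈ S) := fun x hx => by
    simp [(ht x hx).1, Nat.lt_succ_of_le (ht x hx).2]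
  have := Nat.nth_lt_of_lt_count (p := (· ∈ S)) (n := m + 1)
    (by rw [Nat.count_eq_card_filter_range]; exact hk.trans_le (Finset.card_le_card hsub))
  omega

theorem Nat.nth_le_nth_of_subset {S T : Set ℕ} (hS : S.Infinite) (hST : S ⊆ T) (k : ℕ) :
    Nat.nth (· ∈ T) k ≤ Nat.nth (· ∈ S) k :=
  Nat.nth_le_of_strictMonoOn_of_mapsTo (p := (· ∈ T)) _
    (fun n _ => hST (Nat.nth_mem_of_infinite hS n)) ((Nat.nth_strictMono hS).strictMonoOn _)

theorem StrictMono.nth_range {b : ℕ → ℕ} (hb : StrictMono b) (k : ℕ) :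
    Nat.nth (· ∈ Set.range b) k = b k := by
  have hinf : ∀ n, ∀ hf : (Set.range b).Finite, n < hf.toFinset.card := fun _ hf =>
    absurd hf (Set.infinite_range_of_injective hb.injective)
  exact le_antisymm
    (Nat.nth_le_of_strictMonoOn_of_mapsTo (p := (· ∈ Set.range b)) b (fun n _ => ⟨n, rfl⟩)
      (hb.strictMonoOn _))
    (Nat.le_nth_of_monotoneOn_of_surjOn (p := (· ∈ Set.range b)) b
      (fun _ ⟨i, hi⟩ => ⟨i, hinf i, hi⟩) (hb.monotone.monotoneOn _) (hinf k))

theorem exists_totalRecIn_nth_le_of_traces {O : ℕ →. ℕ} {S : Set ℕ} {K : ℕ → Finset ℕ}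
    (hK : OracleComputableIn O K) (hd : ArrayDisjoint K) (ht : Traces K S) :
    ∃ M, TotalRecIn O M ∧ ∀ k, Nat.nth (· ∈ S) k ≤ M k := by
  refine ⟨_, (oracleComputableIn_iff.1 hK).sum_range.comp Computable.succ.totalRecIn,
    fun k => ?_⟩
  choose w hwK hwS using ht
  have hw_inj : Set.InjOn w (Finset.range (k + 1)) := fun i _ j _ hij => by
    by_contra hne
    exact Finset.disjoint_left.1 (hd i j hne) (hwK i) (hij ▸ hwK j)
  refine Nat.nth_le_of_lt_card (t := (Finset.range (k + 1)).image w) (fun x hx => ?_)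
    (by rw [Finset.card_image_of_injOn hw_inj, Finset.card_range]; omega)
  obtain ⟨i, hi, rfl⟩ := Finset.mem_image.1 hx
  refine ⟨hwS i, le_trans ?_ (Finset.single_le_sum (fun _ _ => Nat.zero_le _) hi)⟩
  exact le_of_mem_ofNat_finset (by erw [ofNat_encode]; exact hwK i)

theorem TotalRecIn.oracleComputableIn_Ico {O : ℕ →. ℕ} {h : ℕ → ℕ} (hh : TotalRecIn O h) :
    OracleComputableIn O fun k => Finset.Ico (h k) (h (k + 1)) :=
  oracleComputableIn_iff.2 <| TotalRecIn.encode_comp (F := fun k => (h k, h (k + 1)))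
    primrec_finset_Ico.to_comp (hh.pair (hh.comp Computable.succ.totalRecIn))

theorem exists_traces_of_nth_le {O : ℕ →. ℕ} {S : Set ℕ} (hS : S.Infinite) {M : ℕ → ℕ}
    (hM : TotalRecIn O M) (hle : ∀ k, Nat.nth (· ∈ S) k ≤ M k) :
    ∃ G, OracleComputableIn O G ∧ ArrayDisjoint G ∧ Traces G S := by
  set h : ℕ → ℕ := fun k => (fun n => M n + 1)^[k] 0
  have hsucc : ∀ k, h (k + 1) = M (h k) + 1 := fun k => Function.iterate_succ_apply' ..
  have hnth : ∀ k, Nat.nth (· ∈ S) (h k) < h (k + 1) := fun k => by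
    rw [hsucc]; exact Nat.lt_succ_of_le (hle _)
  have hle_nth : ∀ n, n ≤ Nat.nth (· ∈ S) n := fun _ => Nat.le_nth fun hf => absurd hf hS
  refine ⟨_, (Computable.succ.totalRecIn.comp hM).iterate 0 |>.oracleComputableIn_Ico,
    arrayDisjoint_Ico (strictMono_nat_of_lt_succ fun k => (hle_nth _).trans_lt (hnth k)),
    fun k => ⟨_, Finset.mem_Ico.2 ⟨hle_nth _, hnth k⟩, Nat.nth_mem_of_infinite hS _⟩⟩

theorem exists_traces_of_nth_le_nth_add {O : ℕ →. ℕ} {S T : Set ℕ} (hT : T.Infinite)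
    {D : ℕ → ℕ} (hD : TotalRecIn O D) (hle : ∀ k, Nat.nth (· ∈ T) k ≤ Nat.nth (· ∈ S) k + D k)
    {F : ℕ → Finset ℕ} (hF : OracleComputableIn O F) (hd : ArrayDisjoint F) (ht : Traces F S) :
    ∃ G, OracleComputableIn O G ∧ ArrayDisjoint G ∧ Traces G T := by
  obtain ⟨M, hM, hSM⟩ := exists_totalRecIn_nth_le_of_traces hF hd ht
  exact exists_traces_of_nth_le hT (hM.comp₂ Primrec.nat_add.to_comp hD) fun k =>
    (hle k).trans (Nat.add_le_add_right (hSM k) _)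

theorem hyperimmune_iff {S : Set ℕ} :
    Hyperimmune S ↔ S.Infinite ∧ ∀ M : ℕ → ℕ, Computable M → ∃ k, M k < Nat.nth (· ∈ S) k := by
  have hO : Nat.Partrec fun _ => Part.some 0 := .zero
  constructor
  · rintro ⟨hS, hK⟩
    refine ⟨hS, fun M hM => ?_⟩
    by_contra! hle
    obtain ⟨G, hG, hd, ht⟩ :=
      exists_traces_of_nth_le hS (hM.totalRecIn (O := fun _ => Part.some 0)) hle
    exact hK G ((oracleComputableIn_iff_computable hO).1 hG) hd ht
  · rintro ⟨hS, hM⟩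
    refine ⟨hS, fun K hK hd ht => ?_⟩
    obtain ⟨M, hMc, hle⟩ :=
      exists_totalRecIn_nth_le_of_traces ((oracleComputableIn_iff_computable hO).2 hK) hd ht
    obtain ⟨k, hk⟩ := hM M ((totalRecIn_iff_computable hO).1 hMc)
    exact (hle k).not_gt hk

theorem Hyperimmune.frequently_lt_nth {S : Set ℕ} (hS : Hyperimmune S) {g : ℕ → ℕ}
    (hg : Computable g) : ∃ᶠ k in atTop, g k < Nat.nth (· ∈ S) k := by
  refine frequently_atTop.2 fun N => ?_
  obtain ⟨k, hk⟩ := (hyperimmune_iff.1 hS).2 (fun k => g k + Nat.nth (· ∈ S) N)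
    (Primrec.nat_add.to_comp.comp hg (Computable.const _))
  refine ⟨k, ?_, by omega⟩
  by_contra! hkN
  have := Nat.nth_monotone (p := (· ∈ S)) hS.1 hkN.le
  omega

theorem CoCE.union {A B : Set ℕ} (hA : CoCE A) (hB : CoCE B) : CoCE (A ∪ B) := by
  obtain ⟨f, hf, hfA⟩ := hA
  obtain ⟨g, hg, hgB⟩ := hB
  refine ⟨fun n => (f n).bind fun _ => g n, hf.bind (hg.comp Computable.fst).to₂, fun n => ?_⟩
  simp [← hfA, ← hgB]

theorem CoCE.accumulate {A : ℕ → Set ℕ} (hA : ∀ n, CoCE (A n)) (n : ℕ) :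
    CoCE (Set.accumulate A n) := by
  induction n with
  | zero => simpa [Set.accumulate_zero_nat] using hA 0
  | succ n ih => rw [Set.accumulate_succ]; exact ih.union (hA _)

theorem CoCE.exists_code {V : Set ℕ} (hV : CoCE V) :
    ∃ c : Nat.Partrec.Code, ∀ x, x ∉ V ↔ (c.eval x).Dom := by
  obtain ⟨f, hf, hfV⟩ := hV
  obtain ⟨c, hc⟩ := Nat.Partrec.Code.exists_code.1 <| Partrec.nat_iff.1 <|
    hf.map (Computable.const 0).to₂
  exact ⟨c, fun x => by simp [hc, hfV]⟩

open Nat.Partrec.Code in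
theorem Nat.Partrec.Code.exists_evaln_isSome_of_forall_mem {c : Code} {s : Finset ℕ}
    (h : ∀ x ∈ s, (c.eval x).Dom) : ∃ t, ∀ x ∈ s, (evaln t c x).isSome := by
  refine (eventually_all_finset s |>.2 fun x hx => ?_).exists (f := atTop)
  obtain ⟨t, ht⟩ := evaln_complete.1 (Part.get_mem (h x hx))
  exact eventually_atTop.2 ⟨t, fun t' ht' => Option.isSome_iff_exists.2 ⟨_, evaln_mono ht' ht⟩⟩

theorem Computable.iterate {f : ℕ → ℕ} (hf : Computable f) (a : ℕ) :
    Computable fun k => f^[k] a := by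
  refine (Computable.nat_rec Computable.id (Computable.const a)
    (hf.comp (Computable.snd.comp Computable.snd)).to₂).of_eq fun k => ?_
  induction k with
  | zero => rfl
  | succ k ih => dsimp only [id] at ih ⊢; rw [Function.iterate_succ_apply', ← ih]

theorem exists_computable_strictMono_of_frequently {q : ℕ → ℕ → Bool} (hq : Computable₂ q)
    (h : ∃ᶠ i in atTop, ∃ t, q i t) :
    ∃ f : ℕ → ℕ, Computable f ∧ StrictMono f ∧ ∀ k, ∃ t, q (f k) t := by
  have hex : ∀ prev, ∃ m : ℕ, prev < m.unpair.1 ∧ q m.unpair.1 m.unpair.2 := fun prev => by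
    obtain ⟨i, hi, t, ht⟩ := frequently_atTop.1 h (prev + 1)
    exact ⟨Nat.pair i t, by simpa using ⟨hi, ht⟩⟩
  have hfind : Computable fun prev => Nat.find (hex prev) := by
    have hfst : Computable fun p : ℕ × ℕ => p.2.unpair.1 :=
      Computable.fst.comp (Computable.unpair.comp Computable.snd)
    have hsnd : Computable fun p : ℕ × ℕ => p.2.unpair.2 :=
      Computable.snd.comp (Computable.unpair.comp Computable.snd)
    refine Computable.find (Computable.computablePred ?_) hex
    exact (Primrec.and.to_comp.comp (Primrec.nat_lt.decide.to_comp.comp Computable.fst hfst)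
      (hq.comp hfst hsnd)).of_eq fun p => by simp
  set next : ℕ → ℕ := fun prev => (Nat.find (hex prev)).unpair.1
  have hnext : ∀ prev, prev < next prev ∧ ∃ t, q (next prev) t := fun prev =>
    ⟨(Nat.find_spec (hex prev)).1, _, (Nat.find_spec (hex prev)).2⟩
  refine ⟨fun k => next^[k + 1] 0,
    ((Computable.fst.comp Computable.unpair).comp hfind).iterate 0 |>.comp Computable.succ,
    strictMono_nat_of_lt_succ fun k => ?_, fun k => ?_⟩
  · rw [Function.iterate_succ_apply' next (k + 1)]; exact (hnext _).1
  · simp only [Function.iterate_succ_apply']; exact (hnext _).2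

open Nat.Partrec.Code in
theorem Hyperimmune.union_of_coCE {V A : Set ℕ} (hVc : CoCE V) (hV : Hyperimmune V)
    (hA : Hyperimmune A) : Hyperimmune (V ∪ A) := by
  refine ⟨hV.1.mono Set.subset_union_left, fun K hK hd ht => ?_⟩
  by_cases hfreq : ∃ᶠ i in atTop, ∀ x ∈ K i, x ∉ V
  · obtain ⟨c, hc⟩ := hVc.exists_code
    have hstage : ∀ i, (∀ x ∈ K i, x ∉ V) ↔ ∃ t, ∀ x ∈ K i, (evaln t c x).isSome := fun i =>
      ⟨fun h => exists_evaln_isSome_of_forall_mem fun x hx => (hc x).1 (h x hx),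
        fun ⟨t, ht⟩ x hx => (hc x).2 <| by
          obtain ⟨y, hy⟩ := Option.isSome_iff_exists.1 (ht x hx)
          exact Part.dom_iff_mem.2 ⟨y, evaln_sound hy⟩⟩
    have hR : PrimrecRel fun x t => (evaln t c x).isSome :=
      Primrec.primrecPred <| (Primrec.option_isSome.comp (primrec_evaln.comp
        ((Primrec.snd.pair (Primrec.const c)).pair Primrec.fst))).of_eq fun _ => by simp
    have hq : Computable₂ fun i t => decide (∀ x ∈ K i, (evaln t c x).isSome) :=
      hR.forall_mem_finset.decide.to_comp.comp (hK.comp Computable.fst) Computable.snd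
    obtain ⟨f, hf, hfm, hfV⟩ := exists_computable_strictMono_of_frequently hq
      (by simpa [hstage] using hfreq)
    refine hA.2 (K ∘ f) (hK.comp hf) (hd.comp_injective hfm.injective) fun k => ?_
    obtain ⟨x, hxK, hx⟩ := ht (f k)
    exact ⟨x, hxK, hx.resolve_left ((hstage _).2 (by simpa using hfV k) x hxK)⟩
  · obtain ⟨N, hN⟩ := eventually_atTop.1 (not_frequently.1 hfreq)
    refine hV.2 (fun i => K (i + N)) (hK.comp (Primrec.nat_add.to_comp.comp Computable.id
      (Computable.const N))) (hd.comp_injective (add_left_injective N)) fun i => ?_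
    simpa using hN (i + N) (by omega)

theorem Hyperimmune.accumulate {A : ℕ → Set ℕ} (hco : ∀ n, CoCE (A n))
    (hhyp : ∀ n, Hyperimmune (A n)) (n : ℕ) : Hyperimmune (Set.accumulate A n) := by
  induction n with
  | zero => simpa [Set.accumulate_zero_nat] using hhyp 0
  | succ n ih => rw [Set.accumulate_succ]; exact ih.union_of_coCE (.accumulate hco n) (hhyp _)

theorem countable_setOf_computable : {f : ℕ → ℕ | Computable f}.Countable := by
  refine (Set.countable_range fun (c : Nat.Partrec.Code) n => (c.eval n).getOrElse 0).mono
    fun f hf => ?_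
  obtain ⟨c, hc⟩ := Nat.Partrec.Code.exists_code.1 (Partrec.nat_iff.1 hf)
  exact ⟨c, funext fun n => by simp [hc, Part.getOrElse_some]⟩

theorem exists_tendsto_atTop_forall_exists_eq {S : ℕ → Set ℕ} (hS : ∀ e, (S e).Infinite) :
    ∃ ℓ : ℕ → ℕ, Tendsto ℓ atTop atTop ∧ ∀ e, ∃ k ∈ S e, ℓ k = e := by
  obtain ⟨N, hN, hNS⟩ : ∃ N : ℕ → ℕ, StrictMono N ∧ ∀ e, N e ∈ S e := by
    choose pick hpick hlt using fun e a => (hS e).exists_gt a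
    refine ⟨fun e => Nat.rec (motive := fun _ => ℕ) (pick 0 0) (fun e prev => pick (e + 1) prev) e,
      strictMono_nat_of_lt_succ fun e => hlt _ _, fun e => ?_⟩
    cases e <;> exact hpick _ _
  let ℓ : ℕ → ℕ := fun k => Nat.findGreatest (fun e => N e ≤ k) k
  refine ⟨ℓ, tendsto_atTop_atTop.2 fun m =>
    ⟨N m, fun k hk => Nat.le_findGreatest ((hN.id_le m).trans hk) hk⟩, fun e => ⟨N e, hNS e, ?_⟩⟩
  exact Nat.findGreatest_eq_iff.2
    ⟨hN.id_le e, fun _ => le_rfl, fun n hen _ hn => (hN hen).not_ge hn⟩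

theorem exists_strictMono_exists_lt_and_le_add {h : ℕ → ℕ → ℕ} (hmono : ∀ m, Monotone (h m))
    (hanti : ∀ k, Antitone fun m => h m k) {g : ℕ → ℕ → ℕ}
    (hg : ∀ e, ∃ᶠ k in atTop, g e k < h e k) :
    ∃ b : ℕ → ℕ, StrictMono b ∧ (∀ e, ∃ k, g e k < b k) ∧ ∀ m, ∃ C, ∀ k, b k ≤ h m k + k + C := by
  obtain ⟨ℓ, hℓ, hesc⟩ := exists_tendsto_atTop_forall_exists_eq
    (S := fun e => {k | g e k < h e k}) fun e => Nat.frequently_atTop_iff_infinite.1 (hg e)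
  let c : ℕ → ℕ := fun j => h (ℓ j) j
  refine ⟨fun k => k + (Finset.range (k + 1)).sup c, strictMono_nat_of_lt_succ fun k => ?_,
    fun e => ?_, fun m => ?_⟩
  · have : (Finset.range (k + 1)).sup c ≤ (Finset.range (k + 1 + 1)).sup c :=
      Finset.sup_mono (Finset.range_subset_range.2 (by omega))
    omega
  · obtain ⟨k, hk, hℓk⟩ := hesc e
    have hck : h e k ≤ (Finset.range (k + 1)).sup c := by
      simpa [c, hℓk] using Finset.le_sup (f := c) (Finset.self_mem_range_succ k)
    exact ⟨k, lt_of_lt_of_le hk (hck.trans (Nat.le_add_left _ _))⟩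
  · obtain ⟨K, hK⟩ := eventually_atTop.1 (hℓ.eventually_ge_atTop m)
    refine ⟨(Finset.range K).sup c, fun k => ?_⟩
    have : (Finset.range (k + 1)).sup c ≤ h m k + (Finset.range K).sup c := by
      refine Finset.sup_le fun j hj => ?_
      by_cases hjK : j < K
      · exact le_add_left (Finset.le_sup (Finset.mem_range.2 hjK))
      · exact le_add_right ((hanti j (hK j (by omega))).trans
          (hmono m (by simp only [Finset.mem_range] at hj; omega)))
    dsimp only
    omega

theorem exists_hyperimmune_range_le_nth_add {A : ℕ → Set ℕ} (hco : ∀ n, CoCE (A n))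
    (hhyp : ∀ n, Hyperimmune (A n)) :
    ∃ b : ℕ → ℕ, StrictMono b ∧ Hyperimmune (Set.range b) ∧
      ∀ n, ∃ C, ∀ k, b k ≤ Nat.nth (· ∈ A n) k + k + C := by
  obtain ⟨g, hg⟩ := countable_setOf_computable.exists_eq_range ⟨_, Computable.const 0⟩
  have hU := Hyperimmune.accumulate hco hhyp
  obtain ⟨b, hb, hesc, hle⟩ := exists_strictMono_exists_lt_and_le_add
    (h := fun m k => Nat.nth (· ∈ Set.accumulate A m) k) (fun m => Nat.nth_monotone (hU m).1)
    (fun k _ _ hmm' => Nat.nth_le_nth_of_subset (hU _).1 (Set.monotone_accumulate hmm') k)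
    (fun e => (hU e).frequently_lt_nth (show g e ∈ {f | Computable f} from hg ▸ ⟨e, rfl⟩))
  refine ⟨b, hb, hyperimmune_iff.2 ⟨Set.infinite_range_of_injective hb.injective, fun M hM => ?_⟩,
    fun n => ?_⟩
  · obtain ⟨e, rfl⟩ : M ∈ Set.range g := hg ▸ hM
    obtain ⟨k, hk⟩ := hesc e
    exact ⟨k, (hb.nth_range k).symm ▸ hk⟩
  · obtain ⟨C, hC⟩ := hle n
    refine ⟨C, fun k => (hC k).trans ?_⟩
    have := Nat.nth_le_nth_of_subset (hhyp n).1 Set.subset_accumulate k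
    omega

/-- Combining countably many co-c.e. hyperimmune sets into a single hyperimmune set. -/
theorem countable_coCE_hyperimmune_combine (A : ℕ → Set ℕ)
    (hco : ∀ n, CoCE (A n)) (hhyp : ∀ n, Hyperimmune (A n)) :
    ∃ B : Set ℕ, Hyperimmune B ∧
      (∀ (X : Set ℕ) (n : ℕ) (F : ℕ → Finset ℕ),
        OracleComputableIn (CharFun X) F → ArrayDisjoint F → Traces F (A n) →
        ∃ G : ℕ → Finset ℕ, OracleComputableIn (CharFun X) G ∧ ArrayDisjoint G ∧ Traces G B) ∧
      (∀ X : Set ℕ, HyperimmuneIn (CharFun X) B → ∀ n, HyperimmuneIn (CharFun X) (A n)) := by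
  obtain ⟨b, hb, hB, hle⟩ := exists_hyperimmune_range_le_nth_add hco hhyp
  have transfer : ∀ O n F, OracleComputableIn O F → ArrayDisjoint F → Traces F (A n) →
      ∃ G, OracleComputableIn O G ∧ ArrayDisjoint G ∧ Traces G (Set.range b) := by
    intro O n F hF hd ht
    obtain ⟨C, hC⟩ := hle n
    refine exists_traces_of_nth_le_nth_add hB.1 (D := fun k => k + C)
      (Primrec.nat_add.to_comp.comp Computable.id (Computable.const C)).totalRecIn
      (fun k => ?_) hF hd ht
    rw [hb.nth_range]
    have := hC k
    omega
  refine ⟨Set.range b, hB, fun X n F => transfer _ n F,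
    fun X hX n => ⟨(hhyp n).1, fun F hF hd ht => ?_⟩⟩
  obtain ⟨G, hG, hGd, hGt⟩ := transfer _ n F hF hd ht
  exact hX.2 G hG hGd hGt
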